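/- Let χ = 2ρ̌. For every subset Π_{M'} ⊆ Π one has (w₀ : ξ_{M'}) = (−v)^{|Π|−|Π_{M'}|} · (ξ_{M'} : ξ_{M'}). -/

import Mathlib

/-!
Because `χ = 2ρ̌` pairs to `2` with every simple root, `⟪α, χ⟫` is twice the height of a
positive root `α`. Hence `r₀(w) = ∅` and `r₂(w) = {β ∈ Π : wβ > 0}`, so `τ(w₁, w₂)` counts the
simple roots on which exactly one of `w₁, w₂` stays positive. The longest element sends all of
`Π` to negative roots and `w₀(M)` exactly `Π_M`, so `τ(w₀, w₀(M)) = |Π| - |Π_M|` and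
`τ(w₀(M₁), w₀(M₂)) = |Π_{M₁} ∆ Π_{M₂}|`. Both sides of the identity are then sums over subsets
of `Π_{M'}` whose summands factor over the elements of `Π_{M'}`, and both equal
`(-v)^{|Π| - |Π_{M'}|} (1 - v²)^{|Π_{M'}|}`.
-/

open scoped InnerProductSpace

noncomputable section

/-- The reflection `s_α` in the hyperplane orthogonal to `α`. -/
def sRefl {V : Type*} [NormedAddCommGroup V] [InnerProductSpace ℝ V] [FiniteDimensional ℝ V]
    (α : V) : V ≃ₗᵢ[ℝ] V :=
  Submodule.reflection (ℝ ∙ α)ᗮ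

/-- `r_n(w) = {α ∈ Δ : ⟨α, χ⟩ = n and wα ∈ Δ⁺}`. -/
def rW {V : Type*} [NormedAddCommGroup V] [InnerProductSpace ℝ V]
    (Δ pos : Finset V) (χ : V) (n : ℤ) (w : V ≃ₗᵢ[ℝ] V) : Set V :=
  {α : V | α ∈ Δ ∧ ⟪α, χ⟫_ℝ = (n : ℝ) ∧ w α ∈ pos}

/-- `τ(w₁,w₂) = #(r₂(w₁) ∆ r₂(w₂)) − #(r₀(w₁) ∆ r₀(w₂))`. -/
def tau {V : Type*} [NormedAddCommGroup V] [InnerProductSpace ℝ V]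
    (Δ pos : Finset V) (χ : V) (w₁ w₂ : V ≃ₗᵢ[ℝ] V) : ℤ :=
  ((symmDiff (rW Δ pos χ 2 w₁) (rW Δ pos χ 2 w₂)).ncard : ℤ)
    - ((symmDiff (rW Δ pos χ 0 w₁) (rW Δ pos χ 0 w₂)).ncard : ℤ)

/-- The symmetric `ℚ(v)`-bilinear form on the free `ℚ(v)`-module `K` with basis `W`,
determined on basis elements by `(w₁ : w₂) = (−v)^{τ(w₁,w₂)}`. -/
def Bform {V : Type*} [NormedAddCommGroup V] [InnerProductSpace ℝ V]
    (Δ pos : Finset V) (χ : V) (W : Subgroup (V ≃ₗᵢ[ℝ] V)) :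
    (W →₀ RatFunc ℚ) →ₗ[RatFunc ℚ] (W →₀ RatFunc ℚ) →ₗ[RatFunc ℚ] RatFunc ℚ :=
  Finsupp.linearCombination (RatFunc ℚ) fun w : W =>
    Finsupp.linearCombination (RatFunc ℚ) fun w' : W =>
      (-(RatFunc.X : RatFunc ℚ)) ^ (tau Δ pos χ (w : V ≃ₗᵢ[ℝ] V) (w' : V ≃ₗᵢ[ℝ] V))

/-- `ξ_{M'} = Σ_{Π_M ⊆ Π_{M'}} v^{|Π_{M'}|−|Π_M|} · w₀(M)` in `K`. -/
def xiElt {V : Type*} [NormedAddCommGroup V] [InnerProductSpace ℝ V]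
    (W : Subgroup (V ≃ₗᵢ[ℝ] V)) (w0M : Finset V → W) (M' : Finset V) :
    W →₀ RatFunc ℚ :=
  ∑ M ∈ M'.powerset,
    Finsupp.single (w0M M) ((RatFunc.X : RatFunc ℚ) ^ (M'.card - M.card))

open Finset
open scoped symmDiff

section PowersetSums

variable {R ι : Type*} [CommRing R]

theorem Finset.sum_powerset_prod_ite [DecidableEq ι] (s : Finset ι) (f g : ι → R) :
    ∑ t ∈ s.powerset, ∏ a ∈ s, (if a ∈ t then f a else g a) = ∏ a ∈ s, (f a + g a) := by
  rw [prod_add]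
  refine sum_congr rfl fun t ht => ?_
  rw [prod_ite, filter_mem_eq_inter, inter_eq_right.mpr (mem_powerset.mp ht),
    filter_notMem_eq_sdiff]

theorem Finset.prod_ite_mem_one_eq_pow [DecidableEq ι] {s t : Finset ι} (hts : t ⊆ s) (x : R) :
    ∏ a ∈ s, (if a ∈ t then 1 else x) = x ^ (#s - #t) := by
  rw [prod_ite, prod_const_one, one_mul, filter_notMem_eq_sdiff, prod_const,
    card_sdiff_of_subset hts]

theorem Finset.sum_powerset_pow_mul_neg_pow (x : R) (s : Finset ι) {p : ℕ} (hp : #s ≤ p) :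
    ∑ t ∈ s.powerset, x ^ (#s - #t) * (-x) ^ (p - #t) = (-x) ^ (p - #s) * (1 - x ^ 2) ^ #s := by
  have hterm : ∀ t ∈ s.powerset, x ^ (#s - #t) * (-x) ^ (p - #t)
      = (-x) ^ (p - #s) * (1 ^ #t * (-x ^ 2) ^ (#s - #t)) := by
    intro t ht
    have := card_le_card (mem_powerset.mp ht)
    rw [show p - #t = (p - #s) + (#s - #t) by omega, pow_add, one_pow, one_mul,
      show -x ^ 2 = x * -x by ring, mul_pow]
    ring
  rw [sum_congr rfl hterm, ← mul_sum, sum_pow_mul_eq_add_pow, ← sub_eq_add_neg]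

theorem Finset.sum_powerset_sum_powerset_pow_symmDiff [DecidableEq ι] (x : R) (s : Finset ι) :
    ∑ t₁ ∈ s.powerset, ∑ t₂ ∈ s.powerset,
      x ^ (#s - #t₁) * x ^ (#s - #t₂) * (-x) ^ #(t₁ ∆ t₂) = (1 - x ^ 2) ^ #s := by
  -- each summand factors over the elements of `s`, with a factor depending only on
  -- whether the element lies in `t₁` and in `t₂`
  have hterm : ∀ t₁ ∈ s.powerset, ∀ t₂ ∈ s.powerset,
      x ^ (#s - #t₁) * x ^ (#s - #t₂) * (-x) ^ #(t₁ ∆ t₂)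
        = ∏ a ∈ s, if a ∈ t₂ then (if a ∈ t₁ then 1 else -x ^ 2)
            else (if a ∈ t₁ then -x ^ 2 else x ^ 2) := by
    intro t₁ ht₁ t₂ ht₂
    have hsd : t₁ ∆ t₂ ⊆ s :=
      symmDiff_le_sup.trans (sup_le (mem_powerset.mp ht₁) (mem_powerset.mp ht₂))
    have hneg : (-x) ^ #(t₁ ∆ t₂) = ∏ a ∈ s, if a ∈ t₁ ∆ t₂ then -x else 1 := by
      rw [prod_ite_mem, inter_eq_right.mpr hsd, prod_const]
    rw [← prod_ite_mem_one_eq_pow (mem_powerset.mp ht₁),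
      ← prod_ite_mem_one_eq_pow (mem_powerset.mp ht₂), hneg, ← prod_mul_distrib,
      ← prod_mul_distrib]
    refine prod_congr rfl fun a _ => ?_
    by_cases h₁ : a ∈ t₁ <;> by_cases h₂ : a ∈ t₂ <;> simp [h₁, h₂, mem_symmDiff] <;> ring
  calc _ = ∑ t₁ ∈ s.powerset, ∑ t₂ ∈ s.powerset, ∏ a ∈ s,
          if a ∈ t₂ then (if a ∈ t₁ then 1 else -x ^ 2)
            else (if a ∈ t₁ then -x ^ 2 else x ^ 2) :=
        sum_congr rfl fun t₁ ht₁ => sum_congr rfl fun t₂ ht₂ => hterm t₁ ht₁ t₂ ht₂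
    _ = ∑ t₁ ∈ s.powerset, ∏ a ∈ s, if a ∈ t₁ then 1 + -x ^ 2 else -x ^ 2 + x ^ 2 := by
        refine sum_congr rfl fun t₁ _ => ?_
        simp only [sum_powerset_prod_ite, ite_add_ite]
    _ = (1 - x ^ 2) ^ #s := by
        rw [sum_powerset_prod_ite, prod_const]
        ring

end PowersetSums

theorem Finset.sdiff_symmDiff_sdiff {ι : Type*} [DecidableEq ι] {s t₁ t₂ : Finset ι}
    (h₁ : t₁ ⊆ s) (h₂ : t₂ ⊆ s) : (s \ t₁) ∆ (s \ t₂) = t₁ ∆ t₂ := by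
  ext a
  have := @h₁ a
  have := @h₂ a
  simp only [mem_symmDiff, mem_sdiff]
  tauto

section BilinearForm

variable {V : Type*} [NormedAddCommGroup V] [InnerProductSpace ℝ V]
  (Δ pos : Finset V) (χ : V) (W : Subgroup (V ≃ₗᵢ[ℝ] V))

theorem Bform_single_single (w w' : W) (a b : RatFunc ℚ) :
    Bform Δ pos χ W (Finsupp.single w a) (Finsupp.single w' b)
      = a * (b * (-RatFunc.X) ^ tau Δ pos χ (w : V ≃ₗᵢ[ℝ] V) (w' : V ≃ₗᵢ[ℝ] V)) := by
  simp [Bform]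

theorem Bform_single_xiElt (w : W) (w0M : Finset V → W) (M' : Finset V) :
    Bform Δ pos χ W (Finsupp.single w 1) (xiElt W w0M M')
      = ∑ M ∈ M'.powerset, RatFunc.X ^ (#M' - #M)
          * (-RatFunc.X) ^ tau Δ pos χ (w : V ≃ₗᵢ[ℝ] V) (w0M M : V ≃ₗᵢ[ℝ] V) := by
  simp only [xiElt, map_sum, Bform_single_single, one_mul]

theorem Bform_xiElt_xiElt (w0M : Finset V → W) (M' : Finset V) :
    Bform Δ pos χ W (xiElt W w0M M') (xiElt W w0M M')
      = ∑ M₁ ∈ M'.powerset, ∑ M₂ ∈ M'.powerset, RatFunc.X ^ (#M' - #M₁) * RatFunc.X ^ (#M' - #M₂)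
          * (-RatFunc.X) ^ tau Δ pos χ (w0M M₁ : V ≃ₗᵢ[ℝ] V) (w0M M₂ : V ≃ₗᵢ[ℝ] V) := by
  simp only [xiElt, map_sum, LinearMap.sum_apply, Bform_single_single, mul_assoc]
  exact sum_comm

end BilinearForm

section Reflections

variable {V : Type*} [NormedAddCommGroup V] [InnerProductSpace ℝ V] [FiniteDimensional ℝ V]

theorem sRefl_apply (α x : V) : sRefl α x = x - (2 * ⟪x, α⟫_ℝ / ⟪α, α⟫_ℝ) • α := by
  rw [sRefl, Submodule.reflection_orthogonal_apply, Submodule.reflection_apply,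
    Submodule.starProjection_singleton, real_inner_comm x α, ← real_inner_self_eq_norm_sq]
  simp only [RCLike.ofReal_real_eq_id, id_eq]
  module

theorem sRefl_sRefl (α x : V) : sRefl α (sRefl α x) = x :=
  Submodule.reflection_reflection _ x

theorem sRefl_self (α : V) : sRefl α α = -α :=
  Submodule.reflection_orthogonalComplement_singleton_eq_neg α

theorem sRefl_inv (α : V) : (sRefl α)⁻¹ = sRefl α :=
  Submodule.reflection_symm

theorem sub_mem_span_of_mem_closure_sRefl {S : Set V} {g : V ≃ₗᵢ[ℝ] V}
    (hg : g ∈ Subgroup.closure {e | ∃ α ∈ S, e = sRefl α}) (x : V) :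
    g x - x ∈ Submodule.span ℝ S := by
  induction hg using Subgroup.closure_induction'' generalizing x with
  | mem _ h | inv_mem _ h =>
    obtain ⟨α, hα, rfl⟩ := h
    simp only [sRefl_inv, sRefl_apply, sub_sub_cancel_left]
    exact neg_mem (Submodule.smul_mem _ _ (Submodule.subset_span hα))
  | one => simp
  | mul g g' _ _ hg hg' =>
    rw [LinearIsometryEquiv.coe_mul, Function.comp_apply, ← sub_add_sub_cancel _ (g' x)]
    exact add_mem (hg _) (hg' x)

theorem mem_of_mem_closure_sRefl {S Δ : Set V} (hS : ∀ α ∈ S, ∀ β ∈ Δ, sRefl α β ∈ Δ)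
    {g : V ≃ₗᵢ[ℝ] V} (hg : g ∈ Subgroup.closure {e | ∃ α ∈ S, e = sRefl α}) {β : V}
    (hβ : β ∈ Δ) : g β ∈ Δ := by
  induction hg using Subgroup.closure_induction'' generalizing β with
  | mem _ h | inv_mem _ h =>
    obtain ⟨α, hα, rfl⟩ := h
    simpa only [sRefl_inv] using hS α hα β hβ
  | one => exact hβ
  | mul g g' _ _ hg hg' => exact hg (hg' hβ)

end Reflections

section SimpleSystem

variable {V : Type*} [NormedAddCommGroup V] [InnerProductSpace ℝ V] [FiniteDimensional ℝ V]

structure IsSimpleSystem (Δ pos Pi : Finset V) : Prop where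
  zero_notMem : (0 : V) ∉ Δ
  eq_one_or_eq_neg_one_of_smul_mem : ∀ α ∈ Δ, ∀ t : ℝ, t • α ∈ Δ → t = 1 ∨ t = -1
  sRefl_mem : ∀ α ∈ Δ, ∀ β ∈ Δ, sRefl α β ∈ Δ
  pos_subset : pos ⊆ Δ
  mem_pos_iff : ∀ α ∈ Δ, (α ∈ pos ↔ -α ∉ pos)
  simple_subset : Pi ⊆ pos
  linearIndepOn : LinearIndepOn ℝ id (Pi : Set V)
  exists_nat_coeffs : ∀ α ∈ pos, ∃ c : V → ℕ, α = ∑ β ∈ Pi, (c β : ℝ) • β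

def twoRhoCheck (pos : Finset V) : V :=
  ∑ β ∈ pos, ((2 : ℝ) / ⟪β, β⟫_ℝ) • β

namespace IsSimpleSystem

variable {Δ pos Pi : Finset V}

theorem neg_mem_pos (h : IsSimpleSystem Δ pos Pi) {α : V} (hα : α ∈ Δ) (hα' : α ∉ pos) :
    -α ∈ pos := by
  by_contra hneg
  exact hα' ((h.mem_pos_iff α hα).mpr hneg)

theorem neg_notMem_pos (h : IsSimpleSystem Δ pos Pi) {α : V} (hα : α ∈ pos) : -α ∉ pos :=
  (h.mem_pos_iff α (h.pos_subset hα)).mp hα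

theorem ne_zero_of_mem_pos (h : IsSimpleSystem Δ pos Pi) {α : V} (hα : α ∈ pos) : α ≠ 0 :=
  fun h0 => h.zero_notMem (h0 ▸ h.pos_subset hα)

theorem eq_zero_of_sum_smul_eq_zero (h : IsSimpleSystem Δ pos Pi) {f : V → ℝ}
    (hf : ∑ β ∈ Pi, f β • β = 0) {β : V} (hβ : β ∈ Pi) : f β = 0 :=
  linearIndepOn_finset_iff.mp h.linearIndepOn f hf β hβ

theorem exists_coeff_ne_zero_of_ne (h : IsSimpleSystem Δ pos Pi) {β γ : V} (hβ : β ∈ Pi)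
    (hγ : γ ∈ pos) (hne : γ ≠ β) {c : V → ℕ} (hc : γ = ∑ δ ∈ Pi, (c δ : ℝ) • δ) :
    ∃ δ ∈ Pi, δ ≠ β ∧ c δ ≠ 0 := by
  by_contra! hc0
  have hγβ : γ = (c β : ℝ) • β := by
    rw [hc, sum_eq_single_of_mem β hβ fun δ hδ hδβ => by simp [hc0 δ hδ hδβ]]
  rcases h.eq_one_or_eq_neg_one_of_smul_mem β (h.pos_subset (h.simple_subset hβ)) _
      (hγβ ▸ h.pos_subset hγ) with h1 | h1
  · exact hne (by rw [hγβ, h1, one_smul])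
  · have : (0 : ℝ) ≤ c β := Nat.cast_nonneg _
    linarith

theorem sRefl_mem_pos (h : IsSimpleSystem Δ pos Pi) {β γ : V} (hβ : β ∈ Pi) (hγ : γ ∈ pos)
    (hne : γ ≠ β) : sRefl β γ ∈ pos := by
  classical
  by_contra hnotpos
  obtain ⟨c, hc⟩ := h.exists_nat_coeffs γ hγ
  obtain ⟨m, hm⟩ := h.exists_nat_coeffs _ (h.neg_mem_pos
    (h.sRefl_mem β (h.pos_subset (h.simple_subset hβ)) γ (h.pos_subset hγ)) hnotpos)
  obtain ⟨δ, hδ, hδβ, hcδ⟩ := h.exists_coeff_ne_zero_of_ne hβ hγ hne hc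
  -- `γ - s_β γ` is a multiple of `β`, so `γ + (-s_β γ)` has the coefficient
  -- `c δ + m δ > 0` at `δ ≠ β` on one side and `0` on the other
  set t := 2 * ⟪γ, β⟫_ℝ / ⟪β, β⟫_ℝ
  have hsum : ∑ δ ∈ Pi, ((c δ : ℝ) + m δ - if δ = β then t else 0) • δ = 0 := by
    simp only [sub_smul, add_smul, sum_sub_distrib, sum_add_distrib, ite_smul, zero_smul,
      sum_ite_eq', if_pos hβ, ← hc, ← hm, sRefl_apply]
    abel
  have hδ0 := h.eq_zero_of_sum_smul_eq_zero hsum hδ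
  rw [if_neg hδβ, sub_zero] at hδ0
  have : (1 : ℝ) ≤ c δ := by exact_mod_cast Nat.one_le_iff_ne_zero.mpr hcδ
  have : (0 : ℝ) ≤ m δ := Nat.cast_nonneg _
  linarith

theorem image_sRefl_pos [DecidableEq V] (h : IsSimpleSystem Δ pos Pi) {β : V} (hβ : β ∈ Pi) :
    pos.image (sRefl β) = insert (-β) (pos.erase β) := by
  ext δ
  simp only [mem_image, mem_insert, mem_erase]
  constructor
  · rintro ⟨γ, hγ, rfl⟩
    rcases eq_or_ne γ β with rfl | hne
    · exact Or.inl (sRefl_self γ)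
    · refine Or.inr ⟨fun hγβ => ?_, h.sRefl_mem_pos hβ hγ hne⟩
      rw [← sRefl_sRefl β γ, hγβ, sRefl_self] at hγ
      exact h.neg_notMem_pos (h.simple_subset hβ) hγ
  · rintro (rfl | ⟨hne, hδ⟩)
    · exact ⟨β, h.simple_subset hβ, sRefl_self β⟩
    · exact ⟨sRefl β δ, h.sRefl_mem_pos hβ hδ hne, sRefl_sRefl β δ⟩

theorem sRefl_twoRhoCheck (h : IsSimpleSystem Δ pos Pi) {β : V} (hβ : β ∈ Pi) :
    sRefl β (twoRhoCheck pos) = twoRhoCheck pos - (4 / ⟪β, β⟫_ℝ) • β := by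
  classical
  have hβpos := h.simple_subset hβ
  -- `s_β` permutes the coroots of `pos \ {β}` and sends `β̌` to `-β̌`
  calc sRefl β (twoRhoCheck pos)
      = ∑ γ ∈ pos, (2 / ⟪sRefl β γ, sRefl β γ⟫_ℝ) • sRefl β γ := by
        simp only [twoRhoCheck, map_sum, map_smul, LinearIsometryEquiv.inner_map_map]
    _ = ∑ δ ∈ pos.image (sRefl β), (2 / ⟪δ, δ⟫_ℝ) • δ :=
        (sum_image (f := fun δ => (2 / ⟪δ, δ⟫_ℝ) • δ)
          fun _ _ _ _ hxy => (sRefl β).injective hxy).symm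
    _ = (2 / ⟪β, β⟫_ℝ) • -β + ∑ δ ∈ pos.erase β, (2 / ⟪δ, δ⟫_ℝ) • δ := by
        rw [h.image_sRefl_pos hβ, sum_insert fun hβ' => h.neg_notMem_pos hβpos
          (mem_of_mem_erase hβ'), inner_neg_neg]
    _ = twoRhoCheck pos - (4 / ⟪β, β⟫_ℝ) • β := by
        rw [twoRhoCheck, ← add_sum_erase pos _ hβpos]
        module

theorem inner_twoRhoCheck_of_mem_simple (h : IsSimpleSystem Δ pos Pi) {β : V} (hβ : β ∈ Pi) :
    ⟪β, twoRhoCheck pos⟫_ℝ = 2 := by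
  have hβ0 := h.ne_zero_of_mem_pos (h.simple_subset hβ)
  have hββ : ⟪β, β⟫_ℝ ≠ 0 := inner_self_ne_zero.mpr hβ0
  have hsmul := sub_right_inj.mp ((h.sRefl_twoRhoCheck hβ).symm.trans (sRefl_apply β _))
  have hcoeff := smul_left_injective ℝ hβ0 hsmul
  field_simp at hcoeff
  rw [real_inner_comm]
  linarith

theorem inner_sum_smul_twoRhoCheck (h : IsSimpleSystem Δ pos Pi) (c : V → ℝ) :
    ⟪∑ β ∈ Pi, c β • β, twoRhoCheck pos⟫_ℝ = 2 * ∑ β ∈ Pi, c β := by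
  rw [sum_inner, mul_sum]
  refine sum_congr rfl fun β hβ => ?_
  rw [real_inner_smul_left, h.inner_twoRhoCheck_of_mem_simple hβ, mul_comm]

theorem two_le_inner_twoRhoCheck (h : IsSimpleSystem Δ pos Pi) {α : V} (hα : α ∈ pos) :
    2 ≤ ⟪α, twoRhoCheck pos⟫_ℝ := by
  obtain ⟨c, hc⟩ := h.exists_nat_coeffs α hα
  have hc0 : ∑ β ∈ Pi, c β ≠ 0 := fun h0 => h.ne_zero_of_mem_pos hα <| by
    rw [hc]
    exact sum_eq_zero fun β hβ => by simp [sum_eq_zero_iff.mp h0 β hβ]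
  have : (1 : ℝ) ≤ ∑ β ∈ Pi, (c β : ℝ) := by
    exact_mod_cast Nat.one_le_iff_ne_zero.mpr hc0
  rw [hc, h.inner_sum_smul_twoRhoCheck]
  linarith

theorem inner_twoRhoCheck_le_neg_two (h : IsSimpleSystem Δ pos Pi) {α : V} (hα : α ∈ Δ)
    (hα' : α ∉ pos) : ⟪α, twoRhoCheck pos⟫_ℝ ≤ -2 := by
  have := h.two_le_inner_twoRhoCheck (h.neg_mem_pos hα hα')
  rw [inner_neg_left] at this
  linarith

theorem mem_simple_of_inner_twoRhoCheck_eq_two (h : IsSimpleSystem Δ pos Pi) {α : V}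
    (hα : α ∈ pos) (h2 : ⟪α, twoRhoCheck pos⟫_ℝ = 2) : α ∈ Pi := by
  classical
  obtain ⟨c, hc⟩ := h.exists_nat_coeffs α hα
  have hsum : ∑ β ∈ Pi, c β = 1 := by
    rw [hc, h.inner_sum_smul_twoRhoCheck] at h2
    exact_mod_cast (by linarith : ∑ β ∈ Pi, (c β : ℝ) = 1)
  obtain ⟨β₀, hβ₀, hcβ₀⟩ := exists_ne_zero_of_sum_ne_zero (hsum ▸ one_ne_zero)
  have hsplit := add_sum_erase Pi c hβ₀
  have hrest : ∀ β ∈ Pi, β ≠ β₀ → c β = 0 := fun β hβ hne =>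
    sum_eq_zero_iff.mp (by omega) β (mem_erase.mpr ⟨hne, hβ⟩)
  have hcβ₀_one : c β₀ = 1 := by omega
  rw [hc, sum_eq_single_of_mem β₀ hβ₀ fun β hβ hne => by simp [hrest β hβ hne], hcβ₀_one,
    Nat.cast_one, one_smul]
  exact hβ₀

theorem rW_twoRhoCheck_zero (h : IsSimpleSystem Δ pos Pi) (w : V ≃ₗᵢ[ℝ] V) :
    rW Δ pos (twoRhoCheck pos) 0 w = ∅ := by
  refine Set.eq_empty_iff_forall_notMem.mpr fun α ⟨hαΔ, hα0, _⟩ => ?_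
  push_cast at hα0
  by_cases hα : α ∈ pos
  · linarith [h.two_le_inner_twoRhoCheck hα]
  · linarith [h.inner_twoRhoCheck_le_neg_two hαΔ hα]

theorem rW_twoRhoCheck_two [DecidableEq V] (h : IsSimpleSystem Δ pos Pi) (w : V ≃ₗᵢ[ℝ] V) :
    rW Δ pos (twoRhoCheck pos) 2 w = ↑(Pi.filter (w · ∈ pos)) := by
  ext α
  simp only [rW, Set.mem_ofPred_eq, coe_filter]
  constructor
  · rintro ⟨hαΔ, hα2, hw⟩
    push_cast at hα2
    have hαpos : α ∈ pos := by
      by_contra hα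
      linarith [h.inner_twoRhoCheck_le_neg_two hαΔ hα]
    exact ⟨h.mem_simple_of_inner_twoRhoCheck_eq_two hαpos hα2, hw⟩
  · rintro ⟨hα, hw⟩
    have hα2 : ⟪α, twoRhoCheck pos⟫_ℝ = ((2 : ℤ) : ℝ) := by
      exact_mod_cast h.inner_twoRhoCheck_of_mem_simple hα
    exact ⟨h.pos_subset (h.simple_subset hα), hα2, hw⟩

theorem tau_twoRhoCheck [DecidableEq V] (h : IsSimpleSystem Δ pos Pi) (w₁ w₂ : V ≃ₗᵢ[ℝ] V) :
    tau Δ pos (twoRhoCheck pos) w₁ w₂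
      = #(Pi.filter (w₁ · ∈ pos) ∆ Pi.filter (w₂ · ∈ pos)) := by
  rw [tau, h.rW_twoRhoCheck_zero, h.rW_twoRhoCheck_zero, h.rW_twoRhoCheck_two,
    h.rW_twoRhoCheck_two, ← coe_symmDiff, Set.ncard_coe_finset, symmDiff_self]
  simp

theorem mem_pos_of_sub_mem_span (h : IsSimpleSystem Δ pos Pi) {M : Finset V} (hM : M ⊆ Pi)
    {α γ : V} (hα : α ∈ Pi) (hαM : α ∉ M) (hγ : γ ∈ Δ)
    (hγα : γ - α ∈ Submodule.span ℝ (M : Set V)) : γ ∈ pos := by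
  classical
  by_contra hγpos
  obtain ⟨m, hm⟩ := h.exists_nat_coeffs _ (h.neg_mem_pos hγ hγpos)
  obtain ⟨r, -, hr⟩ := Submodule.mem_span_finset.mp hγα
  -- expanding `(γ - α) + (-γ) + α = 0` in the simple roots, the coefficient of `α` is `m α + 1`
  have hsum : ∑ δ ∈ Pi,
      ((if δ ∈ M then r δ else 0) + m δ + if δ = α then 1 else 0) • δ = 0 := by
    simp only [add_smul, sum_add_distrib, ite_smul, zero_smul, sum_ite_mem,
      inter_eq_right.mpr hM, hr, ← hm, sum_ite_eq', if_pos hα, one_smul]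
    abel
  have hcoeff := h.eq_zero_of_sum_smul_eq_zero hsum hα
  rw [if_neg hαM, if_pos rfl, zero_add] at hcoeff
  linarith [(m α).cast_nonneg (α := ℝ)]

theorem filter_mem_pos_eq_sdiff [DecidableEq V] (h : IsSimpleSystem Δ pos Pi) {M : Finset V}
    (hM : M ⊆ Pi) {w : V ≃ₗᵢ[ℝ] V}
    (hw : w ∈ Subgroup.closure {e : V ≃ₗᵢ[ℝ] V | ∃ α ∈ M, e = sRefl α})
    (hneg : ∀ α ∈ Δ, α ∈ Submodule.span ℝ (M : Set V) → α ∈ pos → -(w α) ∈ pos) :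
    Pi.filter (w · ∈ pos) = Pi \ M := by
  ext α
  simp only [mem_filter, mem_sdiff]
  refine and_congr_right fun hα => ⟨fun hwα hαM => ?_, fun hαM => ?_⟩
  · exact h.neg_notMem_pos hwα (hneg α (h.pos_subset (h.simple_subset hα))
      (Submodule.subset_span hαM) (h.simple_subset hα))
  · have hw' : w ∈ Subgroup.closure {e | ∃ α ∈ (M : Set V), e = sRefl α} := by
      simpa only [mem_coe] using hw
    have hwαΔ : w α ∈ (Δ : Set V) := mem_of_mem_closure_sRefl
      (fun β hβ => h.sRefl_mem β (h.pos_subset (h.simple_subset (hM hβ)))) hw'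
      (h.pos_subset (h.simple_subset hα))
    exact h.mem_pos_of_sub_mem_span hM hα hαM hwαΔ (sub_mem_span_of_mem_closure_sRefl hw' α)

theorem filter_mem_pos_eq_empty [DecidableEq V] (h : IsSimpleSystem Δ pos Pi)
    {w : V ≃ₗᵢ[ℝ] V} (hw : (fun x => w x) '' (pos : Set V) = (fun x => -x) '' (pos : Set V)) :
    Pi.filter (w · ∈ pos) = ∅ := by
  refine filter_eq_empty_iff.mpr fun α hα hwα => ?_
  obtain ⟨γ, hγ, hγα⟩ : w α ∈ (fun x => -x) '' (pos : Set V) :=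
    hw ▸ ⟨α, h.simple_subset hα, rfl⟩
  exact h.neg_notMem_pos hγ (by rwa [← hγα] at hwα)

end IsSimpleSystem

end SimpleSystem

theorem stmt12_general
    {V : Type*} [NormedAddCommGroup V] [InnerProductSpace ℝ V] [FiniteDimensional ℝ V]
    (Δ pos Pi : Finset V) (χ : V)
    -- root system axioms: finite (a `Finset`), spanning, reduced, crystallographic,
    -- stable under negation and under the reflections `s_α`
    (hzero : (0 : V) ∉ Δ)
    (hred : ∀ α ∈ Δ, ∀ t : ℝ, t • α ∈ Δ → t = 1 ∨ t = -1)
    (hrefl : ∀ α ∈ Δ, ∀ β ∈ Δ, sRefl α β ∈ Δ)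
    -- positive roots and simple roots
    (hposΔ : pos ⊆ Δ)
    (hpart : ∀ α ∈ Δ, (α ∈ pos ↔ -α ∉ pos))
    (hPipos : Pi ⊆ pos)
    (hindep : LinearIndependent ℝ (fun β : (Pi : Set V) => (β : V)))
    (hcomb : ∀ α ∈ pos, ∃ c : V → ℕ, α = ∑ β ∈ Pi, (c β : ℝ) • β)
    -- the Weyl group, generated by the reflections in the roots
    (W : Subgroup (V ≃ₗᵢ[ℝ] V))
    -- `χ = 2ρ̌` is the sum of the positive coroots `β̌ = 2β/(β,β)`
    (hchi : χ = ∑ β ∈ pos, ((2 : ℝ) / ⟪β, β⟫_ℝ) • β)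
    -- for each `Π_M ⊆ Π`, `w₀(M) ∈ W` is the element of the subgroup `W_M` generated
    -- by the reflections in `Π_M` mapping every positive root in `Δ ∩ span Π_M` to a
    -- negative root
    (w0M : Finset V → W)
    (hw0MW : ∀ M, M ⊆ Pi →
      (w0M M : V ≃ₗᵢ[ℝ] V) ∈ Subgroup.closure {e : V ≃ₗᵢ[ℝ] V | ∃ α ∈ M, e = sRefl α})
    (hw0Mneg : ∀ M, M ⊆ Pi → ∀ α ∈ Δ,
      α ∈ Submodule.span ℝ (M : Set V) → α ∈ pos → -((w0M M : V ≃ₗᵢ[ℝ] V) α) ∈ pos)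
    -- the longest element `w₀ ∈ W`, with `w₀ (Δ⁺) = −Δ⁺`
    (w0 : W)
    (hw0pos : (fun x => (w0 : V ≃ₗᵢ[ℝ] V) x) '' (pos : Set V)
      = (fun x => -x) '' (pos : Set V)) :
    ∀ M', M' ⊆ Pi →
      Bform Δ pos χ W (Finsupp.single w0 1) (xiElt W w0M M')
        = (-(RatFunc.X : RatFunc ℚ)) ^ (Pi.card - M'.card)
          * Bform Δ pos χ W (xiElt W w0M M') (xiElt W w0M M') := by
  classical
  intro M' hM'
  have hS : IsSimpleSystem Δ pos Pi :=
    ⟨hzero, hred, hrefl, hposΔ, hpart, hPipos, hindep, hcomb⟩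
  obtain rfl : χ = twoRhoCheck pos := hchi
  have hfilter : ∀ M ∈ M'.powerset,
      Pi.filter ((w0M M : V ≃ₗᵢ[ℝ] V) · ∈ pos) = Pi \ M := fun M hM =>
    have hMPi := (mem_powerset.mp hM).trans hM'
    hS.filter_mem_pos_eq_sdiff hMPi (hw0MW M hMPi) (hw0Mneg M hMPi)
  have hτ₀ : ∀ M ∈ M'.powerset,
      tau Δ pos (twoRhoCheck pos) w0 (w0M M) = ((#Pi - #M : ℕ) : ℤ) := fun M hM => by
    rw [hS.tau_twoRhoCheck, hS.filter_mem_pos_eq_empty hw0pos, hfilter M hM,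
      ← bot_eq_empty, bot_symmDiff, card_sdiff_of_subset ((mem_powerset.mp hM).trans hM')]
  have hτ : ∀ M₁ ∈ M'.powerset, ∀ M₂ ∈ M'.powerset,
      tau Δ pos (twoRhoCheck pos) (w0M M₁) (w0M M₂) = (#(M₁ ∆ M₂) : ℤ) := fun M₁ hM₁ M₂ hM₂ => by
    rw [hS.tau_twoRhoCheck, hfilter M₁ hM₁, hfilter M₂ hM₂, sdiff_symmDiff_sdiff
      ((mem_powerset.mp hM₁).trans hM') ((mem_powerset.mp hM₂).trans hM')]
  rw [Bform_single_xiElt, Bform_xiElt_xiElt,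
    sum_congr rfl fun M hM => by rw [hτ₀ M hM, zpow_natCast],
    sum_congr rfl fun M₁ hM₁ => sum_congr rfl fun M₂ hM₂ => by rw [hτ M₁ hM₁ M₂ hM₂, zpow_natCast],
    sum_powerset_pow_mul_neg_pow _ _ (card_le_card hM'), sum_powerset_sum_powerset_pow_symmDiff]

theorem stmt12
    {V : Type*} [NormedAddCommGroup V] [InnerProductSpace ℝ V] [FiniteDimensional ℝ V]
    (Δ pos Pi : Finset V) (χ : V)
    -- root system axioms: finite (a `Finset`), spanning, reduced, crystallographic,
    -- stable under negation and under the reflections `s_α`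
    (hspan : Submodule.span ℝ (Δ : Set V) = ⊤)
    (hzero : (0 : V) ∉ Δ)
    (hsym : ∀ α ∈ Δ, -α ∈ Δ)
    (hred : ∀ α ∈ Δ, ∀ t : ℝ, t • α ∈ Δ → t = 1 ∨ t = -1)
    (hcrys : ∀ α ∈ Δ, ∀ β ∈ Δ, ∃ n : ℤ, 2 * ⟪β, α⟫_ℝ / ⟪α, α⟫_ℝ = (n : ℝ))
    (hrefl : ∀ α ∈ Δ, ∀ β ∈ Δ, sRefl α β ∈ Δ)
    -- positive roots and simple roots
    (hposΔ : pos ⊆ Δ)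
    (hpart : ∀ α ∈ Δ, (α ∈ pos ↔ -α ∉ pos))
    (hPipos : Pi ⊆ pos)
    (hindep : LinearIndependent ℝ (fun β : (Pi : Set V) => (β : V)))
    (hcomb : ∀ α ∈ pos, ∃ c : V → ℕ, α = ∑ β ∈ Pi, (c β : ℝ) • β)
    -- the Weyl group, generated by the reflections in the roots
    (W : Subgroup (V ≃ₗᵢ[ℝ] V))
    (hW : W = Subgroup.closure {e : V ≃ₗᵢ[ℝ] V | ∃ α ∈ Δ, e = sRefl α})
    -- `χ = 2ρ̌` is the sum of the positive coroots `β̌ = 2β/(β,β)`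
    (hchi : χ = ∑ β ∈ pos, ((2 : ℝ) / ⟪β, β⟫_ℝ) • β)
    -- for each `Π_M ⊆ Π`, `w₀(M) ∈ W` is the element of the subgroup `W_M` generated
    -- by the reflections in `Π_M` mapping every positive root in `Δ ∩ span Π_M` to a
    -- negative root
    (w0M : Finset V → W)
    (hw0MW : ∀ M, M ⊆ Pi →
      (w0M M : V ≃ₗᵢ[ℝ] V) ∈ Subgroup.closure {e : V ≃ₗᵢ[ℝ] V | ∃ α ∈ M, e = sRefl α})
    (hw0Mneg : ∀ M, M ⊆ Pi → ∀ α ∈ Δ,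
      α ∈ Submodule.span ℝ (M : Set V) → α ∈ pos → -((w0M M : V ≃ₗᵢ[ℝ] V) α) ∈ pos)
    -- the longest element `w₀ ∈ W`, with `w₀ (Δ⁺) = −Δ⁺`
    (w0 : W)
    (hw0pos : (fun x => (w0 : V ≃ₗᵢ[ℝ] V) x) '' (pos : Set V)
      = (fun x => -x) '' (pos : Set V)) :
    ∀ M', M' ⊆ Pi →
      Bform Δ pos χ W (Finsupp.single w0 1) (xiElt W w0M M')
        = (-(RatFunc.X : RatFunc ℚ)) ^ (Pi.card - M'.card)
          * Bform Δ pos χ W (xiElt W w0M M') (xiElt W w0M M') :=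
  stmt12_general Δ pos Pi χ hzero hred hrefl hposΔ hpart hPipos hindep hcomb W hchi w0M hw0MW
    hw0Mneg w0 hw0pos
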